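/- arXiv:2101.01089 — 2 statements merged into one kernel-verified Lean document; each statement's English description precedes it below -/
import Mathlib

section
/- Let α ∈ (0,1) be fixed and let 0 < C, D < 1 with C + D < 3/4. Then for all sufficiently large positive integers B there exist integers r, b with gcd(r,b) = 1, B < b ≤ 2B, 0 < r < b, α ≤ r/b ≤ α + B^{-C}, and |r̄| ≤ B^{-D}·b, where r̄ denotes the unique integer with |r̄| ≤ b/2 and r·r̄ ≡ 1 (mod b). -/
open Real Filter

/-!
Take `s = 2 ^ j` of size about `B ^ C` and an odd `m` with `s α + 1 ≤ m < s α + 3`. Since `m` is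
invertible modulo `s`, some `b ∈ (B, B + s]` satisfies `s r + 1 = m b` for a natural number `r`.
Then `r / b = m / s - 1 / (s b)` lies in `[α, α + 3 / s)`, the integers `r` and `b` are coprime,
and `r · (-s) ≡ 1 (mod b)`. So `r̄ = -s` has size about `B ^ C ≤ B ^ (1 - D) ≤ B ^ (-D) b`, using
`C + D < 1`.
-/

theorem exists_two_pow_mem_Ioc {y : ℝ} (hy : 1 ≤ y) : ∃ j : ℕ, (2 : ℝ) ^ j ∈ Set.Ioc (y / 2) y := by
  set n := ⌊y⌋₊
  have hn : n ≠ 0 := (Nat.floor_pos.mpr hy).ne'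
  refine ⟨Nat.log 2 n, ?_, ?_⟩
  · have hlt : (n : ℝ) + 1 ≤ 2 ^ (Nat.log 2 n + 1) := by
      exact_mod_cast Nat.lt_pow_succ_log_self one_lt_two n
    have := Nat.lt_floor_add_one y
    rw [pow_succ] at hlt
    linarith
  · calc (2 : ℝ) ^ Nat.log 2 n ≤ n := by exact_mod_cast Nat.pow_log_le_self 2 hn
      _ ≤ y := Nat.floor_le (by linarith)

theorem exists_odd_mem_Ico {x : ℝ} (hx : 0 ≤ x) :
    ∃ m : ℕ, Odd m ∧ (m : ℝ) ∈ Set.Ico (x + 1) (x + 3) := by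
  have hle : x ≤ ⌈x⌉₊ := Nat.le_ceil x
  have hlt : (⌈x⌉₊ : ℝ) < x + 1 := Nat.ceil_lt_add_one hx
  rcases Nat.even_or_odd ⌈x⌉₊ with heven | hodd
  · exact ⟨⌈x⌉₊ + 1, heven.add_one, by push_cast; constructor <;> linarith⟩
  · exact ⟨⌈x⌉₊ + 2, hodd.add_even even_two, by push_cast; constructor <;> linarith⟩

theorem Int.exists_mul_add_one_eq_mul_mem_Ioc {s m : ℤ} (hs : 0 < s) (h : IsCoprime m s) (B : ℤ) :
    ∃ r b : ℤ, b ∈ Set.Ioc B (B + s) ∧ s * r + 1 = m * b := by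
  obtain ⟨u, v, huv⟩ := h
  refine ⟨-v - m * toIocDiv hs B u, toIocMod hs B u, toIocMod_mem_Ioc hs B u, ?_⟩
  have hu := toIocMod_add_toIocDiv_zsmul hs B u
  rw [smul_eq_mul] at hu
  linear_combination -huv - m * hu

theorem Nat.exists_mul_add_one_eq_mul_mem_Ioc {s m : ℕ} (hs : 0 < s) (hm : 0 < m)
    (h : m.Coprime s) (B : ℕ) : ∃ r b : ℕ, b ∈ Set.Ioc B (B + s) ∧ s * r + 1 = m * b := by
  obtain ⟨r, b, ⟨hBb, hbB⟩, hrb⟩ :=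
    Int.exists_mul_add_one_eq_mul_mem_Ioc (by exact_mod_cast hs) (Nat.isCoprime_iff_coprime.mpr h) B
  lift b to ℕ using by omega
  lift r to ℕ using by nlinarith
  exact ⟨r, b, ⟨by omega, by omega⟩, by exact_mod_cast hrb⟩

theorem Nat.coprime_of_mul_add_one_eq_mul {s r m b : ℕ} (h : s * r + 1 = m * b) : r.Coprime b :=
  Nat.isCoprime_iff_coprime.mp ⟨-s, m, by
    have h' : (s * r + 1 : ℤ) = m * b := by exact_mod_cast h
    linear_combination -h'⟩

theorem Int.mul_neg_modEq_one_of_mul_add_one_eq_mul {s r m b : ℤ} (h : s * r + 1 = m * b) :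
    r * -s ≡ 1 [ZMOD b] :=
  Int.modEq_iff_dvd.mpr ⟨m, by linear_combination h⟩

theorem div_mem_Ico_of_mul_add_one_eq_mul {s r m b : ℝ} (hs : 0 < s) (hb : 1 ≤ b)
    (h : s * r + 1 = m * b) : r / b ∈ Set.Ico ((m - 1) / s) (m / s) := by
  have hb0 : 0 < b := by linarith
  constructor
  · rw [div_le_div_iff₀ hs hb0]; nlinarith
  · rw [div_lt_div_iff₀ hb0 hs]; nlinarith

theorem exists_coprime_div_near_with_inv_neg_two_pow {α ε δ : ℝ} (hα : α ∈ Set.Ioo 0 1)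
    (hε : α + ε < 1) {B j : ℕ} (hjε : 3 / 2 ^ j ≤ ε) (hjB : 2 * 2 ^ j ≤ B)
    (hjδ : (2 : ℝ) ^ j ≤ δ * B) :
    ∃ r b : ℕ, Nat.Coprime r b ∧ B < b ∧ b ≤ 2 * B ∧ 0 < r ∧ r < b ∧
      α ≤ (r : ℝ) / b ∧ (r : ℝ) / b ≤ α + ε ∧
      ∃ rbar : ℤ, (r : ℤ) * rbar ≡ 1 [ZMOD (b : ℤ)] ∧
        -((b : ℝ) / 2) < (rbar : ℝ) ∧ (rbar : ℝ) ≤ (b : ℝ) / 2 ∧ |(rbar : ℝ)| ≤ δ * b := by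
  obtain ⟨hα0, hα1⟩ := hα
  have hs : (0 : ℝ) < 2 ^ j := by positivity
  obtain ⟨m, hm_odd, hm_lo, hm_hi⟩ := exists_odd_mem_Ico (x := 2 ^ j * α) (by positivity)
  obtain ⟨r, b, ⟨hBb, hbB⟩, hrb⟩ := Nat.exists_mul_add_one_eq_mul_mem_Ioc (Nat.two_pow_pos j)
    hm_odd.pos (hm_odd.coprime_two_right.pow_right j) B
  have hrb_real : (2 : ℝ) ^ j * r + 1 = m * b := by exact_mod_cast hrb
  have hBb_real : (B : ℝ) < b := by exact_mod_cast hBb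
  have hb1 : (1 : ℝ) ≤ b := by exact_mod_cast (by omega : 1 ≤ b)
  have hjB_real : (2 : ℝ) * 2 ^ j ≤ B := by exact_mod_cast hjB
  obtain ⟨hlo, hhi⟩ := div_mem_Ico_of_mul_add_one_eq_mul hs hb1 hrb_real
  have hαr : α ≤ (r : ℝ) / b := le_trans ((le_div_iff₀ hs).mpr (by linarith)) hlo
  have hrε : (r : ℝ) / b < α + ε := calc
    (r : ℝ) / b < m / 2 ^ j := hhi
    _ < (2 ^ j * α + 3) / 2 ^ j := by gcongr
    _ = α + 3 / 2 ^ j := by field_simp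
    _ ≤ α + ε := by gcongr
  have hr_lt : r < b := by
    have : (r : ℝ) < b := (div_lt_one (by linarith)).mp (by linarith)
    exact_mod_cast this
  have hr_pos : 0 < r := by
    have : (0 : ℝ) < r := (div_pos_iff_of_pos_right (by linarith)).mp (hα0.trans_le hαr)
    exact_mod_cast this
  have hδ : 0 ≤ δ := (pos_of_mul_pos_left (hs.trans_le hjδ) B.cast_nonneg).le
  refine ⟨r, b, Nat.coprime_of_mul_add_one_eq_mul hrb, hBb, by omega, hr_pos, hr_lt, hαr,
    hrε.le, -(2 ^ j : ℕ), ?_, ?_, ?_, ?_⟩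
  · exact Int.mul_neg_modEq_one_of_mul_add_one_eq_mul (m := m) (by exact_mod_cast hrb)
  · push_cast; linarith
  · push_cast; linarith
  · push_cast
    rw [abs_neg, abs_of_pos hs]
    exact hjδ.trans (mul_le_mul_of_nonneg_left hBb_real.le hδ)

theorem eventually_const_mul_rpow_le_rpow {c e : ℝ} (hce : c < e) (K : ℝ) :
    ∀ᶠ x : ℝ in atTop, K * x ^ c ≤ x ^ e := by
  filter_upwards [(tendsto_rpow_atTop (sub_pos.mpr hce)).eventually_ge_atTop K,
    eventually_gt_atTop 0] with x hK hx
  calc K * x ^ c ≤ x ^ (e - c) * x ^ c := by gcongr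
    _ = x ^ e := by rw [← rpow_add hx, sub_add_cancel]

theorem stmt13_general (α C D : ℝ) (hα : α ∈ Set.Ioo (0 : ℝ) 1)
    (hC0 : 0 < C) (hC1 : C < 1) (hCD : C + D < 3 / 4) :
    ∀ᶠ B : ℕ in atTop, ∃ r b : ℕ, Nat.Coprime r b ∧
      B < b ∧ b ≤ 2 * B ∧ 0 < r ∧ r < b ∧
      α ≤ (r : ℝ) / b ∧ (r : ℝ) / b ≤ α + (B : ℝ) ^ (-C) ∧
      ∃ rbar : ℤ, (r : ℤ) * rbar ≡ 1 [ZMOD (b : ℤ)] ∧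
        -((b : ℝ) / 2) < (rbar : ℝ) ∧ (rbar : ℝ) ≤ (b : ℝ) / 2 ∧
        |(rbar : ℝ)| ≤ (B : ℝ) ^ (-D) * b := by
  have hcast := tendsto_natCast_atTop_atTop (R := ℝ)
  filter_upwards [hcast.eventually (eventually_const_mul_rpow_le_rpow hC1 12),
    hcast.eventually (eventually_const_mul_rpow_le_rpow (by linarith : C < -D + 1) 6),
    hcast.eventually ((tendsto_rpow_neg_atTop hC0).eventually_lt_const (sub_pos.mpr hα.2)),
    eventually_ge_atTop 1] with B hB12 hB6 hBε hB1
  have hB : (1 : ℝ) ≤ B := by exact_mod_cast hB1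
  have hBC : 1 ≤ (B : ℝ) ^ C := one_le_rpow hB hC0.le
  rw [rpow_one] at hB12
  rw [rpow_add_one (by positivity)] at hB6
  obtain ⟨j, hj_lo, hj_hi⟩ := exists_two_pow_mem_Ioc (y := 6 * (B : ℝ) ^ C) (by linarith)
  refine exists_coprime_div_near_with_inv_neg_two_pow hα (by linarith) ?_ ?_ (by linarith)
  · rw [rpow_neg (by positivity), ← one_div, div_le_div_iff₀ (by positivity) (by positivity)]
    linarith
  · exact_mod_cast (by linarith : (2 : ℝ) * 2 ^ j ≤ B)

theorem stmt13 (α C D : ℝ) (hα : α ∈ Set.Ioo (0 : ℝ) 1)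
    (hC0 : 0 < C) (hC1 : C < 1) (hD0 : 0 < D) (hD1 : D < 1) (hCD : C + D < 3 / 4) :
    ∀ᶠ B : ℕ in atTop, ∃ r b : ℕ, Nat.Coprime r b ∧
      B < b ∧ b ≤ 2 * B ∧ 0 < r ∧ r < b ∧
      α ≤ (r : ℝ) / b ∧ (r : ℝ) / b ≤ α + (B : ℝ) ^ (-C) ∧
      ∃ rbar : ℤ, (r : ℤ) * rbar ≡ 1 [ZMOD (b : ℤ)] ∧
        -((b : ℝ) / 2) < (rbar : ℝ) ∧ (rbar : ℝ) ≤ (b : ℝ) / 2 ∧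
        |(rbar : ℝ)| ≤ (B : ℝ) ^ (-D) * b :=
  stmt13_general α C D hα hC0 hC1 hCD
end

section
/- Let β ∈ ℝ and 0 < Δ < 1. Define χ_1(u,v) := 1 if β + v < u ≤ β + Δ - v and χ_1(u,v) := 0 otherwise, and χ_2(u) := Δ^{-1} ∫_0^Δ χ_1(u,v) dv. Let a(n) := ∫_β^{β+1} χ_2(u) e(-n u) du denote the Fourier coefficients of the 1-periodic extension of χ_2. Then a(0) = Δ/4, and there is an absolute constant C > 0 such that |a(n)| ≤ C·Δ for all integers n with 0 < |n| ≤ Δ^{-1}, and |a(n)| ≤ C·Δ^{-1}·n^{-2} for all integers n with |n| > Δ^{-1}. Moreover χ_2(u) = ∑_{n=-∞}^{∞} a(n) e(n u) for all u with β < u < β + Δ. -/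
open Real MeasureTheory
open scoped Classical

/-- `χ₁(u,v) = 1` if `β + v < u ≤ β + Δ - v`, and `0` otherwise. -/
noncomputable def chi1 (β Δ u v : ℝ) : ℝ :=
  if β + v < u ∧ u ≤ β + Δ - v then 1 else 0

/-- `χ₂(u) = Δ⁻¹ ∫_0^Δ χ₁(u,v) dv`. -/
noncomputable def chi2 (β Δ u : ℝ) : ℝ :=
  Δ⁻¹ * ∫ v in (0 : ℝ)..Δ, chi1 β Δ u v

/-- The `n`-th Fourier coefficient `a(n) = ∫_β^{β+1} χ₂(u) e(-nu) du` of the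
1-periodic extension of `χ₂`. -/
noncomputable def fcoef (β Δ : ℝ) (n : ℤ) : ℂ :=
  ∫ u in β..(β + 1), (chi2 β Δ u : ℂ) *
    Complex.exp (-(2 * Real.pi * Complex.I * n * u))

/-! Up to the factor `Δ⁻¹`, `χ₂` is the tent `x ↦ max 0 (min x (Δ - x))` translated by `β`.
Integrating the tent against `exp (c x)` on its two linear pieces gives, for `n ≠ 0`,
`a(n) = Δ⁻¹ e(-nβ) ((e(-nΔ/2) - 1) / (-2πin))²`, hence `|a(n)| ≤ Δ⁻¹ / (πn)²`, while
`|a(n)| ≤ a(0) = Δ/4` because `χ₂ ≥ 0`. The quadratic decay makes the Fourier series of the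
continuous periodic function `χ₂` absolutely summable, so it converges to `χ₂` pointwise. -/

open Set intervalIntegral

noncomputable def tent (Δ x : ℝ) : ℝ := max 0 (min x (Δ - x))

section Tent

variable {Δ x : ℝ}

lemma continuous_tent (Δ : ℝ) : Continuous (tent Δ) := by
  unfold tent; fun_prop

lemma tent_nonneg (Δ x : ℝ) : 0 ≤ tent Δ x := le_max_left _ _

lemma tent_le (hΔ : 0 ≤ Δ) (x : ℝ) : tent Δ x ≤ Δ := by
  unfold tent
  rcases le_total 0 x with hx | hx
  · exact max_le hΔ ((min_le_right _ _).trans (by linarith))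
  · exact max_le hΔ ((min_le_left _ _).trans (by linarith))

lemma tent_of_le_half (h₀ : 0 ≤ x) (h : x ≤ Δ / 2) : tent Δ x = x := by
  rw [tent, min_eq_left (by linarith), max_eq_right h₀]

lemma tent_of_half_le (h : Δ / 2 ≤ x) (h₁ : x ≤ Δ) : tent Δ x = Δ - x := by
  rw [tent, min_eq_right (by linarith), max_eq_right (by linarith)]

lemma tent_of_le (h : Δ ≤ x) : tent Δ x = 0 :=
  max_eq_left ((min_le_right _ _).trans (by linarith))

lemma integral_tent_smul {E : Type*} [NormedAddCommGroup E] [NormedSpace ℝ E] {f : ℝ → E}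
    (hf : Continuous f) {b : ℝ} (hΔ : 0 ≤ Δ) (hb : Δ ≤ b) :
    ∫ x in 0..b, tent Δ x • f x =
      (∫ x in 0..Δ / 2, x • f x) + ∫ x in Δ / 2..Δ, (Δ - x) • f x := by
  have hint (a c : ℝ) : IntervalIntegrable (fun x => tent Δ x • f x) volume a c :=
    ((continuous_tent Δ).smul hf).intervalIntegrable a c
  rw [← integral_add_adjacent_intervals (hint 0 Δ) (hint Δ b),
    ← integral_add_adjacent_intervals (hint 0 (Δ / 2)) (hint (Δ / 2) Δ)]
  have hvanish : ∫ x in Δ..b, tent Δ x • f x = 0 := by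
    rw [integral_congr (g := 0) fun x hx => by
      rw [uIcc_of_le hb] at hx; simp [tent_of_le hx.1]]
    simp
  rw [hvanish, add_zero]
  congr 1 <;> refine integral_congr fun x hx => ?_
  · rw [uIcc_of_le (by linarith)] at hx
    rw [tent_of_le_half hx.1 hx.2]
  · rw [uIcc_of_le (by linarith)] at hx
    rw [tent_of_half_le hx.1 hx.2]

lemma integral_tent {b : ℝ} (hΔ : 0 ≤ Δ) (hb : Δ ≤ b) : ∫ x in 0..b, tent Δ x = Δ ^ 2 / 4 := by
  have := integral_tent_smul (f := fun _ => (1 : ℝ)) continuous_const hΔ hb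
  simp only [smul_eq_mul, mul_one] at this
  rw [this, integral_comp_sub_left (fun x => x), integral_id, integral_id]
  ring

lemma hasDerivAt_affine_mul_cexp {c : ℂ} (hc : c ≠ 0) (p q : ℂ) (x : ℝ) :
    HasDerivAt (fun x : ℝ => ((p * x + q) / c - p / c ^ 2) * Complex.exp (c * x))
      ((p * x + q) * Complex.exp (c * x)) x := by
  have hx : HasDerivAt (fun x : ℝ => (x : ℂ)) 1 x := by
    simpa using (hasDerivAt_id x).ofReal_comp
  have := ((((hx.const_mul p).add_const q).div_const c).sub_const (p / c ^ 2)).mul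
    (hx.const_mul c).cexp
  refine this.congr_deriv ?_
  field_simp
  ring

lemma integral_affine_mul_cexp {c : ℂ} (hc : c ≠ 0) (p q : ℂ) (a b : ℝ) :
    ∫ x in a..b, (p * x + q) * Complex.exp (c * x) =
      ((p * b + q) / c - p / c ^ 2) * Complex.exp (c * b) -
        ((p * a + q) / c - p / c ^ 2) * Complex.exp (c * a) :=
  integral_eq_sub_of_hasDerivAt (fun x _ => hasDerivAt_affine_mul_cexp hc p q x)
    (by apply Continuous.intervalIntegrable; fun_prop)

lemma integral_tent_mul_cexp {b : ℝ} (hΔ : 0 ≤ Δ) (hb : Δ ≤ b) {c : ℂ} (hc : c ≠ 0) :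
    ∫ x in 0..b, (tent Δ x : ℂ) * Complex.exp (c * x) =
      ((Complex.exp (c * Δ / 2) - 1) / c) ^ 2 := by
  have h := integral_tent_smul (f := fun x : ℝ => Complex.exp (c * x)) (by fun_prop) hΔ hb
  simp only [Complex.real_smul] at h
  have h₁ := integral_affine_mul_cexp hc 1 0 0 (Δ / 2)
  have h₂ := integral_affine_mul_cexp hc (-1) Δ (Δ / 2) Δ
  simp only [one_mul, add_zero, neg_one_mul, neg_add_eq_sub] at h₁ h₂
  push_cast at h h₁ h₂
  rw [h, h₁, h₂]
  have hsq : Complex.exp (c * Δ) = Complex.exp (c * Δ / 2) ^ 2 := by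
    rw [sq, ← Complex.exp_add]; ring_nf
  rw [hsq, mul_div_assoc]
  simp only [mul_zero, Complex.exp_zero]
  field_simp
  ring

end Tent

section Chi

variable {β Δ : ℝ}

lemma chi2_eq_tent (hΔ : 0 ≤ Δ) (u : ℝ) : chi2 β Δ u = Δ⁻¹ * tent Δ (u - β) := by
  rw [chi2]
  congr 1
  calc ∫ v in (0 : ℝ)..Δ, chi1 β Δ u v
      = ∫ v in (0 : ℝ)..Δ, {v | v ≤ tent Δ (u - β)}.indicator 1 v := by
        refine integral_congr_ae ?_
        filter_upwards [Measure.ae_ne volume (u - β)] with v hv hv₀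
        rw [uIoc_of_le hΔ] at hv₀
        have hmem : (β + v < u ∧ u ≤ β + Δ - v) ↔ v ≤ tent Δ (u - β) := by
          rw [tent, le_max_iff, le_min_iff]
          constructor
          · rintro ⟨h₁, h₂⟩
            exact Or.inr ⟨by linarith, by linarith⟩
          · rintro (h | ⟨h₁, h₂⟩)
            · linarith [hv₀.1]
            · exact ⟨by linarith [lt_of_le_of_ne h₁ hv], by linarith⟩
        simp only [chi1, indicator_apply, mem_ofPred_eq, hmem, Pi.one_apply]
    _ = tent Δ (u - β) := by
        rw [integral_indicator ⟨tent_nonneg _ _, tent_le hΔ _⟩]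
        simp

lemma continuous_chi2 (hΔ : 0 ≤ Δ) : Continuous (chi2 β Δ) := by
  simp_rw [funext (chi2_eq_tent (β := β) hΔ)]
  exact continuous_const.mul ((continuous_tent Δ).comp (continuous_sub_right β))

lemma chi2_nonneg (hΔ : 0 ≤ Δ) (u : ℝ) : 0 ≤ chi2 β Δ u := by
  rw [chi2_eq_tent hΔ]
  exact mul_nonneg (inv_nonneg.2 hΔ) (tent_nonneg _ _)

lemma chi2_add_one (hΔ : 0 ≤ Δ) (hΔ₁ : Δ ≤ 1) : chi2 β Δ (β + 1) = chi2 β Δ β := by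
  rw [chi2_eq_tent hΔ, chi2_eq_tent hΔ, add_sub_cancel_left, sub_self, tent_of_le hΔ₁,
    tent_of_le_half le_rfl (by linarith)]

lemma integral_chi2 (hΔ : 0 < Δ) (hΔ₁ : Δ ≤ 1) : ∫ u in β..β + 1, chi2 β Δ u = Δ / 4 := by
  simp_rw [chi2_eq_tent hΔ.le]
  rw [intervalIntegral.integral_const_mul, integral_comp_sub_right (tent Δ), sub_self,
    add_sub_cancel_left, integral_tent hΔ.le hΔ₁]
  field_simp

lemma integral_chi2_mul_cexp (hΔ : 0 < Δ) (hΔ₁ : Δ ≤ 1) {c : ℂ} (hc : c ≠ 0) :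
    ∫ u in β..β + 1, (chi2 β Δ u : ℂ) * Complex.exp (c * u) =
      Δ⁻¹ * Complex.exp (c * β) * ((Complex.exp (c * Δ / 2) - 1) / c) ^ 2 := by
  have hshift := integral_comp_sub_right (a := β) (b := β + 1)
    (fun x : ℝ => (Δ⁻¹ * Complex.exp (c * β)) * ((tent Δ x : ℂ) * Complex.exp (c * x))) β
  simp only [sub_self, add_sub_cancel_left, intervalIntegral.integral_const_mul,
    integral_tent_mul_cexp hΔ.le hΔ₁ hc] at hshift
  rw [← hshift, ← intervalIntegral.integral_const_mul]
  refine intervalIntegral.integral_congr fun u _ => ?_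
  simp only [chi2_eq_tent hΔ.le]
  rw [show Complex.exp (c * u) = Complex.exp (c * β) * Complex.exp (c * ↑(u - β)) by
    rw [← Complex.exp_add]; push_cast; ring_nf]
  push_cast
  ring

end Chi

lemma hasSum_fourier_of_continuousOn {g : ℝ → ℂ} {a x : ℝ} (hg : ContinuousOn g (Icc a (a + 1)))
    (hper : g a = g (a + 1))
    (hsum : Summable fun n : ℤ => ∫ u in a..a + 1, g u * Complex.exp (-(2 * π * Complex.I * n * u)))
    (hx : x ∈ Ico a (a + 1)) :
    HasSum (fun n : ℤ => (∫ u in a..a + 1, g u * Complex.exp (-(2 * π * Complex.I * n * u))) *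
      Complex.exp (2 * π * Complex.I * n * x)) (g x) := by
  have : Fact ((0 : ℝ) < 1) := ⟨one_pos⟩
  have hcoef (n : ℤ) : fourierCoeff (AddCircle.liftIco 1 a g) n =
      ∫ u in a..a + 1, g u * Complex.exp (-(2 * π * Complex.I * n * u)) := by
    rw [fourierCoeff_liftIco_eq, fourierCoeffOn_eq_integral]
    simp only [fourier_coe_apply, add_sub_cancel_left, Complex.ofReal_one, div_one, one_smul,
      smul_eq_mul, Int.cast_neg, mul_neg, neg_mul, mul_comm (g _)]
  let F : C(AddCircle (1 : ℝ), ℂ) := ⟨_, AddCircle.liftIco_continuous hper hg⟩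
  have h := has_pointwise_sum_fourier_series_of_summable (f := F)
    (by convert hsum using 1; exact funext hcoef) x
  rw [ContinuousMap.coe_mk, AddCircle.liftIco_coe_apply hx] at h
  convert h using 2 with n
  rw [hcoef, smul_eq_mul, fourier_coe_apply, Complex.ofReal_one, div_one]

section Coefficients

variable {β Δ : ℝ}

lemma fcoef_zero (hΔ : 0 < Δ) (hΔ₁ : Δ ≤ 1) : fcoef β Δ 0 = ((Δ / 4 : ℝ) : ℂ) := by
  simp only [fcoef, Int.cast_zero, mul_zero, zero_mul, neg_zero, Complex.exp_zero, mul_one]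
  rw [intervalIntegral.integral_ofReal, integral_chi2 hΔ hΔ₁]

lemma fcoef_eq (hΔ : 0 < Δ) (hΔ₁ : Δ ≤ 1) {n : ℤ} (hn : n ≠ 0) :
    fcoef β Δ n = Δ⁻¹ * Complex.exp (-(2 * π * Complex.I * n) * β) *
      ((Complex.exp (-(2 * π * Complex.I * n) * Δ / 2) - 1) / -(2 * π * Complex.I * n)) ^ 2 := by
  have hc : -(2 * π * Complex.I * n) ≠ 0 := by
    simp [hn, Real.pi_ne_zero]
  rw [← integral_chi2_mul_cexp hΔ hΔ₁ hc, fcoef]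
  simp only [neg_mul]

lemma norm_fcoef_le (hΔ : 0 < Δ) (hΔ₁ : Δ ≤ 1) (n : ℤ) : ‖fcoef β Δ n‖ ≤ Δ / 4 := by
  have hnorm (u : ℝ) :
      ‖(chi2 β Δ u : ℂ) * Complex.exp (-(2 * π * Complex.I * n * u))‖ = chi2 β Δ u := by
    rw [norm_mul, Complex.norm_exp, Complex.norm_real, Real.norm_of_nonneg (chi2_nonneg hΔ.le u)]
    simp
  calc ‖fcoef β Δ n‖
      ≤ ∫ u in β..β + 1, ‖(chi2 β Δ u : ℂ) * Complex.exp (-(2 * π * Complex.I * n * u))‖ :=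
        intervalIntegral.norm_integral_le_integral_norm (by linarith)
    _ = Δ / 4 := by simp_rw [hnorm]; exact integral_chi2 hΔ hΔ₁

lemma norm_fcoef_le_inv (hΔ : 0 < Δ) (hΔ₁ : Δ ≤ 1) {n : ℤ} (hn : n ≠ 0) :
    ‖fcoef β Δ n‖ ≤ Δ⁻¹ / (π * n) ^ 2 := by
  have hunit (t : ℝ) : ‖Complex.exp (-(2 * π * Complex.I * n) * t)‖ = 1 := by
    rw [Complex.norm_exp]; simp
  have hsub : ‖Complex.exp (-(2 * π * Complex.I * n) * Δ / 2) - 1‖ ≤ 2 := by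
    calc _ ≤ ‖Complex.exp (-(2 * π * Complex.I * n) * Δ / 2)‖ + ‖(1 : ℂ)‖ := norm_sub_le _ _
      _ = 2 := by
        rw [mul_div_assoc, show (Δ : ℂ) / 2 = ((Δ / 2 : ℝ) : ℂ) by push_cast; rfl, hunit]
        norm_num
  have hc : ‖-(2 * π * Complex.I * n)‖ = 2 * π * |(n : ℝ)| := by
    simp [abs_of_pos Real.pi_pos]
  have hn' : (0 : ℝ) < |(n : ℝ)| := by positivity
  rw [fcoef_eq hΔ hΔ₁ hn, norm_mul, norm_mul, hunit, mul_one, norm_pow, norm_div, hc,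
    Complex.norm_real, Real.norm_of_nonneg (inv_nonneg.2 hΔ.le)]
  calc Δ⁻¹ * (‖Complex.exp (-(2 * π * Complex.I * n) * Δ / 2) - 1‖ / (2 * π * |(n : ℝ)|)) ^ 2
      ≤ Δ⁻¹ * (2 / (2 * π * |(n : ℝ)|)) ^ 2 := by gcongr
    _ = Δ⁻¹ / (π * n) ^ 2 := by
      rw [div_pow, mul_pow, sq_abs]; field_simp

lemma summable_fcoef (hΔ : 0 < Δ) (hΔ₁ : Δ ≤ 1) : Summable (fcoef β Δ) := by
  refine Summable.of_norm_bounded_eventually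
    ((Real.summable_one_div_int_pow.mpr one_lt_two).mul_left (Δ⁻¹ / π ^ 2)) ?_
  filter_upwards [Filter.eventually_cofinite_ne 0] with n hn
  calc ‖fcoef β Δ n‖ ≤ Δ⁻¹ / (π * n) ^ 2 := norm_fcoef_le_inv hΔ hΔ₁ hn
    _ = Δ⁻¹ / π ^ 2 * (1 / (n : ℝ) ^ 2) := by ring

lemma hasSum_fcoef_mul_cexp (hΔ : 0 < Δ) (hΔ₁ : Δ ≤ 1) {u : ℝ} (hu : u ∈ Ico β (β + 1)) :
    HasSum (fun n : ℤ => fcoef β Δ n * Complex.exp (2 * π * Complex.I * n * u))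
      ((chi2 β Δ u : ℝ) : ℂ) :=
  hasSum_fourier_of_continuousOn (g := fun u => (chi2 β Δ u : ℂ))
    (Complex.continuous_ofReal.comp (continuous_chi2 hΔ.le)).continuousOn
    (by rw [chi2_add_one hΔ.le hΔ₁]) (summable_fcoef hΔ hΔ₁) hu

end Coefficients

theorem stmt14 :
    (∀ β Δ : ℝ, 0 < Δ → Δ < 1 → fcoef β Δ 0 = ((Δ / 4 : ℝ) : ℂ)) ∧
    (∃ C : ℝ, 0 < C ∧ ∀ β Δ : ℝ, 0 < Δ → Δ < 1 → ∀ n : ℤ, n ≠ 0 →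
      ((|n| : ℝ) ≤ Δ⁻¹ → ‖fcoef β Δ n‖ ≤ C * Δ) ∧
      (Δ⁻¹ < (|n| : ℝ) → ‖fcoef β Δ n‖ ≤ C * Δ⁻¹ / (n : ℝ) ^ 2)) ∧
    (∀ β Δ : ℝ, 0 < Δ → Δ < 1 → ∀ u : ℝ, β < u → u < β + Δ →
      HasSum (fun n : ℤ => fcoef β Δ n * Complex.exp (2 * Real.pi * Complex.I * n * u))
        ((chi2 β Δ u : ℝ) : ℂ)) := by
  refine ⟨fun β Δ hΔ hΔ₁ => fcoef_zero hΔ hΔ₁.le,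
    ⟨1, one_pos, fun β Δ hΔ hΔ₁ n hn => ⟨fun _ => ?_, fun _ => ?_⟩⟩,
    fun β Δ hΔ hΔ₁ u hu₁ hu₂ => hasSum_fcoef_mul_cexp hΔ hΔ₁.le ⟨hu₁.le, by linarith⟩⟩
  · linarith [norm_fcoef_le (β := β) hΔ hΔ₁.le n]
  · calc ‖fcoef β Δ n‖ ≤ Δ⁻¹ / (π * n) ^ 2 := norm_fcoef_le_inv hΔ hΔ₁.le hn
      _ ≤ 1 * Δ⁻¹ / (n : ℝ) ^ 2 := by
        rw [one_mul, mul_pow]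
        gcongr
        exact le_mul_of_one_le_left (sq_nonneg _) (one_le_pow₀ (by linarith [Real.pi_gt_three]))
end
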